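/- arXiv:1410.0262 — 3 statements merged into one kernel-verified Lean document; each statement's English description precedes it below -/
import Mathlib

section
/- Let U be an invertible upper triangular N×N matrix and M any N×N matrix. Then for all 1 ≤ i ≤ N and 1 ≤ j ≤ N, the rank of the south-west submatrix is preserved under conjugation: rk((U M U⁻¹)_{i:N, 1:j}) = rk(M_{i:N, 1:j}), where A_{i:N,1:j} denotes the submatrix of A with rows i,…,N and columns 1,…,j. -/
/-!
Write `p = {a | i ≤ a}` and `q = {b | b ≤ j}`. Because `p` is an up-set, `q` a down-set and
both `U` and `U⁻¹` are upper triangular, the blocks of `U` from `p` to its complement and of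
`U⁻¹` from the complement of `q` to `q` vanish, so `(U M U⁻¹)_{p,q} = U_{p,p} M_{p,q} (U⁻¹)_{q,q}`.
The diagonal of a principal block is part of the diagonal of the whole triangular matrix, so
both outer factors are invertible and do not change the rank.
-/

/-- The south-west justified submatrix of `M` on rows `i, …, N` and columns `1, …, j`. -/
def swSub {N : ℕ} (M : Matrix (Fin N) (Fin N) ℂ) (i j : Fin N) :
    Matrix {a : Fin N // i ≤ a} {b : Fin N // b ≤ j} ℂ :=
  M.submatrix (fun a => (a : Fin N)) (fun b => (b : Fin N))

namespace Matrix

variable {ι κ R : Type*} [LinearOrder ι] [Fintype ι] [CommRing R]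

theorem IsUpperTriangular.isUnit_det_toBlock {U : Matrix ι ι R} (hU : U.IsUpperTriangular)
    (hdet : IsUnit U.det) (p : ι → Prop) [DecidablePred p] : IsUnit (U.toBlock p p).det := by
  have hblock : (U.toBlock p p).IsUpperTriangular := hU.submatrix
  rw [det_of_isUpperTriangular hU, IsUnit.prod_univ_iff] at hdet
  rw [det_of_isUpperTriangular hblock, IsUnit.prod_univ_iff]
  exact fun a => hdet a

theorem IsUpperTriangular.toBlock_mul_of_monotone {A : Matrix ι ι R} (hA : A.IsUpperTriangular)
    (B : Matrix ι κ R) {p : ι → Prop} [DecidablePred p] (hp : Monotone p) (q : κ → Prop) :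
    (A * B).toBlock p q = A.toBlock p p * B.toBlock p q := by
  have hzero : A.toBlock p (fun c => ¬p c) = 0 := by
    ext a c
    exact hA (lt_of_not_ge fun hac => c.2 (hp hac a.2))
  rw [toBlock_mul_eq_add p p q, hzero, Matrix.zero_mul, add_zero]

theorem IsUpperTriangular.toBlock_mul_of_antitone {B : Matrix ι ι R} (hB : B.IsUpperTriangular)
    (A : Matrix κ ι R) (p : κ → Prop) {q : ι → Prop} [DecidablePred q] (hq : Antitone q) :
    (A * B).toBlock p q = A.toBlock p q * B.toBlock q q := by
  have hzero : B.toBlock (fun c => ¬q c) q = 0 := by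
    ext c b
    exact hB (lt_of_not_ge fun hcb => c.2 (hq hcb b.2))
  rw [toBlock_mul_eq_add p q q, hzero, Matrix.mul_zero, add_zero]

theorem IsUpperTriangular.rank_toBlock_conj {U : Matrix ι ι R}
    (hU : U.IsUpperTriangular) (hdet : IsUnit U.det) (M : Matrix ι ι R)
    {p q : ι → Prop} [DecidablePred p] [DecidablePred q] (hp : Monotone p) (hq : Antitone q) :
    ((U * M * U⁻¹).toBlock p q).rank = (M.toBlock p q).rank := by
  have : Invertible U := U.invertibleOfIsUnitDet hdet
  have hUinv : U⁻¹.IsUpperTriangular := blockTriangular_inv_of_blockTriangular hU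
  rw [Matrix.mul_assoc, hU.toBlock_mul_of_monotone _ hp, hUinv.toBlock_mul_of_antitone _ _ hq,
    rank_mul_eq_right_of_isUnit_det _ _ (hU.isUnit_det_toBlock hdet p),
    rank_mul_eq_left_of_isUnit_det _ _
      (hUinv.isUnit_det_toBlock (U.isUnit_nonsing_inv_det hdet) q)]

end Matrix

/-- conjugation by an invertible upper triangular matrix preserves the
ranks of all south-west justified submatrices. -/
theorem stmt_9 (N : ℕ) (U M : Matrix (Fin N) (Fin N) ℂ)
    (hU : IsUnit U) (hUtri : ∀ i j : Fin N, j < i → U i j = 0) :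
    ∀ i j : Fin N, (swSub (U * M * U⁻¹) i j).rank = (swSub M i j).rank := fun i j =>
  Matrix.IsUpperTriangular.rank_toBlock_conj (fun a b h => hUtri a b h)
    ((Matrix.isUnit_iff_isUnit_det U).mp hU) M
    (p := (i ≤ ·)) (q := (· ≤ j)) (fun _ _ hab hia => hia.trans hab)
    (fun _ _ hab hbj => hab.trans hbj)
end

section
/- Let π ∈ Inv^i_N be an involution of {1,…,N} with π(i) = N − π(N−i+1) + 1, N = 2n. Define the N×N matrix π^i_< by (π^i_<)_{ij} = 0 if j ≤ i, (π^i_<)_{ij} = −δ_{i,π(j)} if n < i < j, and (π^i_<)_{ij} = δ_{i,π(j)} otherwise. Then (π^i_<)² = 0 and π^i_< lies in the symplectic Lie algebra, i.e. J·π^i_< + (π^i_<)ᵀ·J = 0, where J is the antidiagonal symplectic form. -/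
/-- The antidiagonal symplectic form `J` on `ℂ^(2n)` (0-based indices). -/
noncomputable def symJ (n : ℕ) : Matrix (Fin (2*n)) (Fin (2*n)) ℂ :=
  Matrix.of fun i j =>
    if (i : ℕ) + (j : ℕ) = 2*n - 1 then (if (i : ℕ) < n then 1 else -1) else 0

/-- The matrix `π^i_<` associated to an involution `π`: `(π^i_<)_{ij} = 0` if `j ≤ i`,
`-δ_{i,π(j)}` if `n < i < j` (1-based; i.e. `n ≤ i < j` 0-based), and `δ_{i,π(j)}`
otherwise. -/
noncomputable def piLess (n : ℕ) (π : Equiv.Perm (Fin (2*n))) :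
    Matrix (Fin (2*n)) (Fin (2*n)) ℂ :=
  Matrix.of fun i j =>
    if (j : ℕ) ≤ (i : ℕ) then 0
    else if n ≤ (i : ℕ) ∧ (i : ℕ) < (j : ℕ) then (if π j = i then -1 else 0)
    else (if π j = i then 1 else 0)

/-!
Both matrices are signed partial permutation matrices with the sign `ε_i` of the row.
`π^i_<` is supported on the pairs `i < j` with `π j = i`, so a nonzero product
`(π^i_<)_{ij} (π^i_<)_{jk}` would force `i < j < k` and `k = π (π k) = i`.
Since `J` pairs row `i` with column `rev i` and `ε_{rev i} = -ε_i`, the symplectic condition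
reduces to `(π^i_<)_{rev i, k} ≠ 0 ↔ (π^i_<)_{rev k, i} ≠ 0`, which is exactly the
equivariance of `π` under `rev`.
-/

theorem Matrix.mul_self_eq_zero_of_support {ι R : Type*} [Fintype ι] [Preorder ι]
    [NonUnitalNonAssocSemiring R] {π : ι → ι} (hπ : Function.Involutive π)
    {A : Matrix ι ι R} (hA : ∀ i j, A i j ≠ 0 → i < j ∧ π j = i) : A * A = 0 := by
  ext i k
  refine Finset.sum_eq_zero fun j _ => ?_
  by_contra hne
  obtain ⟨hij, hji⟩ := hA i j (left_ne_zero_of_mul hne)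
  obtain ⟨hjk, hkj⟩ := hA j k (right_ne_zero_of_mul hne)
  have hki : k = i := by rw [← hπ k, hkj, hji]
  exact (hij.trans hjk).ne hki.symm

namespace Symplectic

variable {n : ℕ}

/-- The sign `ε_i` of the form `J`, 0-based. -/
noncomputable def sign (n : ℕ) (i : Fin (2*n)) : ℂ := if (i : ℕ) < n then 1 else -1

theorem sign_rev (i : Fin (2*n)) : sign n i.rev = -sign n i := by
  have := Fin.val_rev i
  unfold sign
  split_ifs <;> first | omega | norm_num

theorem sign_mul_sign_rev (i : Fin (2*n)) : sign n i * sign n i.rev = -1 := by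
  rw [sign_rev]
  unfold sign
  split_ifs <;> norm_num

theorem symJ_apply (i j : Fin (2*n)) : symJ n i j = if j = i.rev then sign n i else 0 := by
  have := Fin.val_rev i
  have := j.isLt
  simp only [symJ, Matrix.of_apply, sign, Fin.ext_iff]
  congr 1
  exact propext (by omega)

theorem symJ_mul_apply (A : Matrix (Fin (2*n)) (Fin (2*n)) ℂ) (i k : Fin (2*n)) :
    (symJ n * A) i k = sign n i * A i.rev k := by
  simp [Matrix.mul_apply, symJ_apply, ite_mul]

theorem mul_symJ_apply (A : Matrix (Fin (2*n)) (Fin (2*n)) ℂ) (i k : Fin (2*n)) :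
    (A * symJ n) i k = -(A i k.rev * sign n k) := by
  have hrev (j : Fin (2*n)) : k = j.rev ↔ j = k.rev := by rw [eq_comm, Fin.rev_eq_iff]
  simp [Matrix.mul_apply, symJ_apply, mul_ite, hrev, sign_rev]

theorem piLess_apply (π : Equiv.Perm (Fin (2*n))) (i j : Fin (2*n)) :
    piLess n π i j = if i < j ∧ π j = i then sign n i else 0 := by
  simp only [piLess, sign, Matrix.of_apply, Fin.lt_def]
  split_ifs <;> simp_all <;> omega

theorem lt_and_apply_eq_of_piLess_ne_zero {π : Equiv.Perm (Fin (2*n))} {i j : Fin (2*n)}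
    (h : piLess n π i j ≠ 0) : i < j ∧ π j = i := by
  rw [piLess_apply] at h
  by_contra hc
  exact h (if_neg hc)

theorem sign_mul_piLess_rev (π : Equiv.Perm (Fin (2*n))) (i k : Fin (2*n)) :
    sign n i * piLess n π i.rev k = if i.rev < k ∧ π k = i.rev then -1 else 0 := by
  rw [piLess_apply, mul_ite, mul_zero, sign_mul_sign_rev]

theorem rev_lt_and_apply_eq_rev_comm {π : Equiv.Perm (Fin (2*n))}
    (hinv : Function.Involutive π) (hsym : ∀ i, π i = (π i.rev).rev) (i k : Fin (2*n)) :
    (i.rev < k ∧ π k = i.rev) ↔ (k.rev < i ∧ π i = k.rev) := by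
  have hrev : ∀ i k, π k = i.rev → π i = k.rev := fun i k h => by
    rw [hsym, ← h, hinv]
  rw [Fin.rev_lt_iff]
  exact and_congr_right' ⟨hrev i k, hrev k i⟩

end Symplectic

open Symplectic in
theorem stmt_12_general (n : ℕ) (π : Equiv.Perm (Fin (2*n)))
    (hinv : ∀ i, π (π i) = i) (hsym : ∀ i, π i = (π i.rev).rev) :
    piLess n π * piLess n π = 0 ∧
    symJ n * piLess n π + (piLess n π).transpose * symJ n = 0 := by
  refine ⟨Matrix.mul_self_eq_zero_of_support hinv fun _ _ => lt_and_apply_eq_of_piLess_ne_zero,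
    ?_⟩
  ext i k
  rw [Matrix.add_apply, symJ_mul_apply, mul_symJ_apply, Matrix.transpose_apply,
    mul_comm (piLess n π k.rev i), sign_mul_piLess_rev, sign_mul_piLess_rev]
  simp only [rev_lt_and_apply_eq_rev_comm hinv hsym, add_neg_cancel, Matrix.zero_apply]

/-- for `π ∈ Inv^i_N` (an involution equivariant under the reflection,
expressed 0-based as `π i = (π i.rev).rev`), the matrix `π^i_<` squares to zero and
lies in the symplectic Lie algebra: `J·π^i_< + (π^i_<)ᵀ·J = 0`. -/
theorem stmt_12 (n : ℕ) (hn : 0 < n) (π : Equiv.Perm (Fin (2*n)))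
    (hinv : ∀ i, π (π i) = i) (hsym : ∀ i, π i = (π i.rev).rev) :
    piLess n π * piLess n π = 0 ∧
    symJ n * piLess n π + (piLess n π).transpose * symJ n = 0 :=
  stmt_12_general n π hinv hsym
end

section
/- Let b(x,y) = (A² − (x−y)²)(A² − (x+y)²)/(x² − y²) as a rational function in variables x, y, A. Then b is antisymmetric: b(x,y) = −b(y,x), and the product ∏_{1≤i<j≤L} b(z_i,z_j) times the Pfaffian Pf[1/b(z_i,z_j)]_{1≤i,j≤L} (L even) is a polynomial in z_1,…,z_L, A that is symmetric under permutations of the z_i. -/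
/-!
Write `b(z_i, z_j) = N_ij / D_ij` with `D_ij = z_i² - z_j²` and `N_ij` symmetric, and let
`F = ∏_{i<j} b(z_i, z_j) · Pf[1/b(z_i, z_j)]`, `D = ∏_{i<j} D_ij`. Each term of the Pfaffian has
denominator `∏ N_ij` over a perfect matching, which divides `∏_{i<j} N_ij`, so `G = D · F` is a
polynomial. A signed permutation `z_i ↦ ±z_{σ i}` multiplies both `∏ b` and the Pfaffian by
`sgn σ`; hence it fixes `F` and multiplies `D` and `G` by `sgn σ`. So `G` is odd under
`z_i ↔ z_j` and even in `z_i`, hence vanishes at `z_i = ±z_j`. The primes `z_i ∓ z_j` are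
pairwise non-associate, so their product `D` divides `G`, and `F = G / D` is a polynomial,
symmetric because `F` is.
-/

open MvPolynomial

/-- The field of rational functions in the variables `z_1, …, z_L` (indexed by
`some i`) and `A` (indexed by `none`). -/
abbrev RatFld (L : ℕ) := FractionRing (MvPolynomial (Option (Fin L)) ℚ)

/-- The variable `z i` as a rational function. -/
noncomputable def zVar (L : ℕ) (i : Fin L) : RatFld L :=
  algebraMap (MvPolynomial (Option (Fin L)) ℚ) (RatFld L) (X (some i))

/-- The variable `A` as a rational function. -/
noncomputable def AVar (L : ℕ) : RatFld L :=
  algebraMap (MvPolynomial (Option (Fin L)) ℚ) (RatFld L) (X none)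

/-- `b(x,y) = (A² - (x-y)²)(A² - (x+y)²)/(x² - y²)`. -/
noncomputable def bFun (L : ℕ) (x y : RatFld L) : RatFld L :=
  ((AVar L)^2 - (x - y)^2) * ((AVar L)^2 - (x + y)^2) / (x^2 - y^2)

/-- The Pfaffian of a `2m × 2m` matrix, via the sum-over-permutations formula
`Pf(A) = (2^m m!)⁻¹ Σ_σ sgn(σ) Π_i A_{σ(2i-1), σ(2i)}` (valid in characteristic `0`). -/
noncomputable def pfaffian {K : Type*} [Field K] {m : ℕ}
    (A : Matrix (Fin (2*m)) (Fin (2*m)) K) : K :=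
  ((2^m * (Nat.factorial m) : ℕ) : K)⁻¹ *
    ∑ σ : Equiv.Perm (Fin (2*m)), ((Equiv.Perm.sign σ : ℤ) : K) *
      ∏ i : Fin m, A (σ ⟨2*(i : ℕ), by have := i.isLt; omega⟩)
                     (σ ⟨2*(i : ℕ) + 1, by have := i.isLt; omega⟩)

open Finset

section PairProducts

variable {n : ℕ}

def ltPairs (n : ℕ) : Finset (Fin n × Fin n) := univ.filter fun q => q.1 < q.2

lemma mem_ltPairs {q : Fin n × Fin n} : q ∈ ltPairs n ↔ q.1 < q.2 := by simp [ltPairs]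

lemma prod_ltPairs_eq_prod_Ioi {M : Type*} [CommMonoid M] (f : Fin n → Fin n → M) :
    ∏ q ∈ ltPairs n, f q.1 q.2 = ∏ i, ∏ j ∈ Ioi i, f i j :=
  prod_finset_product _ _ _ (by simp [ltPairs])

variable {R : Type*} [CommRing R]

lemma Equiv.Perm.sign_mul_sign {α : Type*} [DecidableEq α] [Fintype α] (σ : Equiv.Perm α) :
    ((σ.sign : ℤ) : R) * σ.sign = 1 := by
  rw [← Int.cast_mul, ← Units.val_mul, Int.units_mul_self, Units.val_one, Int.cast_one]

lemma prod_ltPairs_comp_perm_of_antisymm (σ : Equiv.Perm (Fin n)) {f : Fin n → Fin n → R}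
    (hf : ∀ i j, f i j = -f j i) :
    ∏ q ∈ ltPairs n, f (σ q.1) (σ q.2) = σ.sign * ∏ q ∈ ltPairs n, f q.1 q.2 := by
  rw [prod_ltPairs_eq_prod_Ioi (fun a b => f (σ a) (σ b)), prod_ltPairs_eq_prod_Ioi f]
  exact σ.prod_Ioi_comp_eq_sign_mul_prod hf

lemma prod_ltPairs_comp_perm_of_symm (σ : Equiv.Perm (Fin n)) {g : Fin n → Fin n → R}
    (hg : ∀ i j, g i j = g j i) :
    ∏ q ∈ ltPairs n, g (σ q.1) (σ q.2) = ∏ q ∈ ltPairs n, g q.1 q.2 := by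
  -- Twisted by the sign of `j - i`, `g` becomes antisymmetric.
  set s : Fin n → Fin n → R := fun i j => if i < j then 1 else if j < i then -1 else 0
  have hs : ∀ i j, s i j = -s j i := fun i j => by
    rcases lt_trichotomy i j with h | rfl | h
    · simp [s, h, h.not_gt]
    · simp [s]
    · simp [s, h, h.not_gt]
  have hs_one : ∏ q ∈ ltPairs n, s q.1 q.2 = 1 :=
    prod_eq_one fun q hq => if_pos (mem_ltPairs.1 hq)
  have h := prod_ltPairs_comp_perm_of_antisymm σ (f := fun i j => s i j * g i j)
    fun i j => by rw [hs, hg]; ring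
  simp only [prod_mul_distrib, prod_ltPairs_comp_perm_of_antisymm σ hs, hs_one, one_mul,
    mul_one] at h
  calc ∏ q ∈ ltPairs n, g (σ q.1) (σ q.2)
      = (σ.sign * σ.sign : R) * ∏ q ∈ ltPairs n, g (σ q.1) (σ q.2) := by
        rw [σ.sign_mul_sign, one_mul]
    _ = ∏ q ∈ ltPairs n, g q.1 q.2 := by
        rw [mul_assoc, h, ← mul_assoc, σ.sign_mul_sign, one_mul]

lemma prod_comp_pairing_dvd_prod_ltPairs {m : ℕ} (σ : Equiv.Perm (Fin (2 * m)))
    {g : Fin (2 * m) → Fin (2 * m) → R} (hg : ∀ i j, g i j = g j i) :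
    ∏ k : Fin m, g (σ ⟨2 * k, by omega⟩) (σ ⟨2 * k + 1, by omega⟩)
      ∣ ∏ q ∈ ltPairs (2 * m), g q.1 q.2 := by
  rw [← prod_ltPairs_comp_perm_of_symm σ hg]
  let e : Fin m → Fin (2 * m) × Fin (2 * m) := fun k =>
    (⟨2 * k, by omega⟩, ⟨2 * k + 1, by omega⟩)
  have he : Function.Injective e := fun k k' h => by
    simp only [e, Prod.mk.injEq, Fin.mk.injEq] at h; omega
  rw [← prod_image (s := univ) (f := fun q => g (σ q.1) (σ q.2)) he.injOn]
  refine prod_dvd_prod_of_subset _ _ _ fun q hq => ?_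
  obtain ⟨k, -, rfl⟩ := mem_image.1 hq
  simp [mem_ltPairs, e, Fin.lt_def]

end PairProducts

section Pfaffian

variable {K K' : Type*} [Field K] [Field K'] {m : ℕ}

lemma map_pfaffian {F : Type*} [FunLike F K K'] [RingHomClass F K K'] (f : F)
    (M : Matrix (Fin (2 * m)) (Fin (2 * m)) K) :
    f (pfaffian M) = pfaffian (M.map f) := by
  simp only [pfaffian, map_mul, map_inv₀, map_natCast, map_sum, map_intCast, map_prod,
    Matrix.map_apply]

lemma pfaffian_submatrix (M : Matrix (Fin (2 * m)) (Fin (2 * m)) K)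
    (σ : Equiv.Perm (Fin (2 * m))) :
    pfaffian (M.submatrix σ σ) = σ.sign * pfaffian M := by
  rw [pfaffian, pfaffian, mul_left_comm ((σ.sign : ℤ) : K), mul_sum _ _ ((σ.sign : ℤ) : K)]
  congr 1
  rw [← Equiv.sum_comp (Equiv.mulLeft σ⁻¹)]
  refine sum_congr rfl fun π _ => ?_
  simp only [Equiv.coe_mulLeft, Equiv.Perm.sign_mul, Equiv.Perm.sign_inv, Units.val_mul,
    Int.cast_mul, mul_assoc, Matrix.submatrix_apply, Equiv.Perm.mul_apply,
    Equiv.Perm.coe_inv, Equiv.apply_symm_apply]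

lemma algebraMap_prod_mul_pfaffian_mem_range {R : Type*} [CommRing R] [Algebra ℚ R]
    [Algebra R K] [IsFractionRing R K] (d g : Fin (2 * m) → Fin (2 * m) → R)
    (hg : ∀ i j, g i j = g j i) (hg₀ : ∀ i j, g i j ≠ 0) :
    algebraMap R K (∏ q ∈ ltPairs (2 * m), g q.1 q.2) *
        pfaffian (Matrix.of fun i j => algebraMap R K (d i j) / algebraMap R K (g i j))
      ∈ (algebraMap R K).range := by
  unfold pfaffian
  rw [mul_left_comm, mul_sum]
  refine mul_mem ⟨algebraMap ℚ R ((2 ^ m * m.factorial : ℕ) : ℚ)⁻¹, ?_⟩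
    (sum_mem fun π _ => ?_)
  · rw [← RingHom.comp_apply, map_inv₀, map_natCast]
  rw [mul_left_comm]
  refine mul_mem (intCast_mem _ _) ?_
  obtain ⟨Q, hQ⟩ := prod_comp_pairing_dvd_prod_ltPairs π hg
  refine ⟨Q * ∏ k : Fin m, d (π ⟨2 * k, by omega⟩) (π ⟨2 * k + 1, by omega⟩), ?_⟩
  have hg₀' (k : Fin m) :
      algebraMap R K (g (π ⟨2 * k, by omega⟩) (π ⟨2 * k + 1, by omega⟩)) ≠ 0 :=
    (map_ne_zero_iff _ (IsFractionRing.injective R K)).2 (hg₀ _ _)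
  simp only [hQ, map_mul, map_prod, Matrix.of_apply, prod_div_distrib]
  field_simp [prod_ne_zero_iff.2 fun k _ => hg₀' k]

end Pfaffian

namespace MvPolynomial

variable {ι R : Type*} [CommRing R] [DecidableEq ι]

lemma X_sub_dvd_sub_aeval_update (i : ι) (p f : MvPolynomial ι R) :
    X i - p ∣ f - aeval (Function.update X i p) f := by
  rw [← Ideal.mem_span_singleton, ← Ideal.Quotient.eq]
  have h : (Ideal.Quotient.mkₐ R (Ideal.span {X i - p})).comp (aeval (Function.update X i p)) =
      Ideal.Quotient.mkₐ R (Ideal.span {X i - p}) := by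
    ext k
    rcases eq_or_ne k i with rfl | hk
    · simpa using (Ideal.Quotient.eq.2 (Ideal.mem_span_singleton_self _)).symm
    · simp [hk]
  exact (DFunLike.congr_fun h f).symm

noncomputable def negVarEquiv (i : ι) : MvPolynomial ι R ≃ₐ[R] MvPolynomial ι R :=
  AlgEquiv.ofAlgHom (aeval (Function.update X i (-X i))) (aeval (Function.update X i (-X i)))
    (algHom_ext fun k => by rcases eq_or_ne k i with rfl | hk <;> simp [*])
    (algHom_ext fun k => by rcases eq_or_ne k i with rfl | hk <;> simp [*])

lemma negVarEquiv_apply (i : ι) (f : MvPolynomial ι R) :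
    negVarEquiv i f = aeval (Function.update X i (-X i)) f := rfl

lemma aeval_update_negVarEquiv (i : ι) (q f : MvPolynomial ι R) :
    aeval (Function.update X i q) (negVarEquiv i f) = aeval (Function.update X i (-q)) f := by
  rw [negVarEquiv_apply, ← AlgHom.comp_apply, comp_aeval]
  congr 2
  funext k
  rcases eq_or_ne k i with rfl | hk <;> simp [*]

lemma aeval_update_X_eq_zero_of_rename_swap [IsDomain R] [CharZero R] {i j : ι}
    {f : MvPolynomial ι R} (hf : rename (Equiv.swap i j) f = -f) :
    aeval (Function.update (X : ι → MvPolynomial ι R) i (X j)) f = 0 := by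
  have h := congrArg (aeval (Function.update (X : ι → MvPolynomial ι R) i (X j))) hf
  have hcomp : Function.update (X : ι → MvPolynomial ι R) i (X j) ∘ Equiv.swap i j =
      Function.update (X : ι → MvPolynomial ι R) i (X j) := by
    funext k
    rcases eq_or_ne k i with rfl | hki
    · simp [Function.update_apply]
    rcases eq_or_ne k j with rfl | hkj
    · simp [hki]
    · simp [Equiv.swap_apply_of_ne_of_ne hki hkj, hki]
  rwa [aeval_rename, hcomp, map_neg, self_eq_neg] at h

lemma X_sub_C_mul_X_dvd_of_rename_swap [IsDomain R] [CharZero R] {i j : ι}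
    {f : MvPolynomial ι R} (hswap : rename (Equiv.swap i j) f = -f)
    (hneg : negVarEquiv i f = f) {c : R} (hc : c = 1 ∨ c = -1) :
    X i - C c * X j ∣ f := by
  have hzero := aeval_update_X_eq_zero_of_rename_swap hswap
  rcases hc with rfl | rfl
  · rw [map_one, one_mul]
    simpa only [hzero, sub_zero] using X_sub_dvd_sub_aeval_update i (X j) f
  · rw [← hneg, aeval_update_negVarEquiv] at hzero
    rw [map_neg, map_one, neg_one_mul]
    simpa only [hzero, sub_zero] using X_sub_dvd_sub_aeval_update i (-X j) f

lemma irreducible_X_sub_C_mul_X [IsDomain R] {i j : ι} (hij : i ≠ j) (c : R) :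
    Irreducible (X i - C c * X j : MvPolynomial ι R) := by
  have hi : i ∉ (-(C c * X j) : MvPolynomial ι R).vars := fun hi => hij <| by
    simpa [vars_neg] using vars_mul (C c) (X j) (vars_neg (C c * X j) ▸ hi)
  simpa [sub_eq_add_neg] using
    irreducible_mul_X_add 1 (-(C c * X j)) i one_ne_zero (by simp) hi isRelPrime_one_left

lemma eq_of_X_sub_C_mul_X_dvd [Nontrivial R] {i j k l : ι} (hij : i ≠ j) (hkl : k ≠ l)
    {c d : R} (hd : d ≠ 0) (h : X i - C c * X j ∣ X k - C d * X l) :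
    k = i ∧ l = j ∧ c = d ∨ k = j ∧ l = i := by
  have heval : ∀ v : ι → R, v i = c * v j → v k = d * v l := by
    rintro v hv
    obtain ⟨q, hq⟩ := h
    have := congrArg (eval v) hq
    simp only [map_sub, map_mul, eval_X, eval_C, hv, sub_self, zero_mul] at this
    exact sub_eq_zero.1 this
  have hk : k = i ∨ k = j := by
    by_contra! hk
    simpa [hk.1.symm, hk.2.symm, hkl.symm] using heval (Pi.single k 1)
  have hl : l = i ∨ l = j := by
    by_contra! hl
    exact hd (by simpa [hl.1.symm, hl.2.symm, hkl] using
      (heval (Pi.single l 1) (by simp [hl.1.symm, hl.2.symm])).symm)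
  rcases hk with rfl | rfl
  · obtain rfl : l = j := hl.resolve_left hkl.symm
    left
    refine ⟨rfl, rfl, ?_⟩
    simpa [hij, hij.symm] using heval (fun t => if t = k then c else if t = l then 1 else 0)
  · exact Or.inr ⟨rfl, hl.resolve_right hkl.symm⟩

end MvPolynomial

namespace RatFld

abbrev Pol (L : ℕ) := MvPolynomial (Option (Fin L)) ℚ

variable {L : ℕ}

noncomputable def bNum (i j : Fin L) : Pol L :=
  (X none ^ 2 - (X (some i) - X (some j)) ^ 2) * (X none ^ 2 - (X (some i) + X (some j)) ^ 2)

noncomputable def bDen (i j : Fin L) : Pol L := X (some i) ^ 2 - X (some j) ^ 2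

lemma bFun_zVar (i j : Fin L) :
    bFun L (zVar L i) (zVar L j) =
      algebraMap (Pol L) (RatFld L) (bNum i j) / algebraMap (Pol L) (RatFld L) (bDen i j) := by
  simp only [bFun, zVar, AVar, bNum, bDen, map_mul, map_sub, map_add, map_pow]

lemma algebraMap_bDen (i j : Fin L) :
    algebraMap (Pol L) (RatFld L) (bDen i j) = zVar L i ^ 2 - zVar L j ^ 2 := by
  simp only [bDen, zVar, map_sub, map_pow]

lemma bNum_comm (i j : Fin L) : bNum i j = bNum j i := by
  unfold bNum; ring

lemma bNum_ne_zero (i j : Fin L) : bNum i j ≠ 0 := fun h => by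
  simpa [bNum] using congrArg (eval fun t => if t = none then (1 : ℚ) else 0) h

lemma bDen_ne_zero {i j : Fin L} (hij : i ≠ j) : bDen i j ≠ 0 := fun h => by
  simpa [bDen, hij.symm] using congrArg (eval fun t => if t = some i then (1 : ℚ) else 0) h

lemma prod_bDen_ne_zero : ∏ q ∈ ltPairs L, bDen q.1 q.2 ≠ 0 :=
  prod_ne_zero_iff.2 fun _ hq => bDen_ne_zero (mem_ltPairs.1 hq).ne

lemma bFun_antisymm (x y : RatFld L) : bFun L x y = -bFun L y x := by
  rw [bFun, bFun, ← div_neg]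
  congr 1 <;> ring

lemma bFun_neg_left (x y : RatFld L) : bFun L (-x) y = bFun L x y := by
  rw [bFun, bFun]
  congr 1 <;> ring

lemma bFun_neg_right (x y : RatFld L) : bFun L x (-y) = bFun L x y := by
  rw [bFun, bFun]
  congr 1 <;> ring

def ActsBySignedPerm (φ : RatFld L ≃+* RatFld L) (σ : Equiv.Perm (Fin L)) : Prop :=
  φ (AVar L) = AVar L ∧ ∀ i, φ (zVar L i) = zVar L (σ i) ∨ φ (zVar L i) = -zVar L (σ i)

namespace ActsBySignedPerm

variable {φ : RatFld L ≃+* RatFld L} {σ : Equiv.Perm (Fin L)}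

lemma map_bFun_zVar (h : ActsBySignedPerm φ σ) (i j : Fin L) :
    φ (bFun L (zVar L i) (zVar L j)) = bFun L (zVar L (σ i)) (zVar L (σ j)) := by
  have hmap : φ (bFun L (zVar L i) (zVar L j)) = bFun L (φ (zVar L i)) (φ (zVar L j)) := by
    simp only [bFun, map_div₀, map_mul, map_sub, map_add, map_pow, h.1]
  rw [hmap]
  rcases h.2 i with hi | hi <;> rcases h.2 j with hj | hj <;>
    simp only [hi, hj, bFun_neg_left, bFun_neg_right]

lemma map_prod_bFun (h : ActsBySignedPerm φ σ) :
    φ (∏ q ∈ ltPairs L, bFun L (zVar L q.1) (zVar L q.2)) =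
      σ.sign * ∏ q ∈ ltPairs L, bFun L (zVar L q.1) (zVar L q.2) := by
  simp only [map_prod, h.map_bFun_zVar]
  exact prod_ltPairs_comp_perm_of_antisymm σ (f := fun i j => bFun L (zVar L i) (zVar L j))
    fun i j => bFun_antisymm _ _

lemma map_algebraMap_prod_bDen (h : ActsBySignedPerm φ σ) :
    φ (algebraMap (Pol L) (RatFld L) (∏ q ∈ ltPairs L, bDen q.1 q.2)) =
      σ.sign * algebraMap (Pol L) (RatFld L) (∏ q ∈ ltPairs L, bDen q.1 q.2) := by
  have hsq : ∀ i, φ (zVar L i) ^ 2 = zVar L (σ i) ^ 2 := fun i => by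
    rcases h.2 i with hi | hi <;> simp [hi]
  simp only [map_prod, algebraMap_bDen, map_sub, map_pow, hsq]
  exact prod_ltPairs_comp_perm_of_antisymm σ (f := fun i j => zVar L i ^ 2 - zVar L j ^ 2)
    fun i j => by ring

end ActsBySignedPerm

lemma actsBySignedPerm_ringEquivOfRingEquiv (e : Pol L ≃+* Pol L) (σ : Equiv.Perm (Fin L))
    (hA : e (X none) = X none)
    (hz : ∀ i, e (X (some i)) = X (some (σ i)) ∨ e (X (some i)) = -X (some (σ i))) :
    ActsBySignedPerm (IsFractionRing.ringEquivOfRingEquiv e : RatFld L ≃+* RatFld L) σ := by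
  refine ⟨?_, fun i => ?_⟩
  · simp [AVar, hA]
  · rcases hz i with h | h <;> simp [zVar, h]

lemma actsBySignedPerm_rename (σ : Equiv.Perm (Fin L)) :
    ActsBySignedPerm (IsFractionRing.ringEquivOfRingEquiv
      (renameEquiv ℚ (Equiv.optionCongr σ)).toRingEquiv : RatFld L ≃+* RatFld L) σ :=
  actsBySignedPerm_ringEquivOfRingEquiv _ σ (by simp) fun i => Or.inl (by simp)

lemma actsBySignedPerm_negVarEquiv (i : Fin L) :
    ActsBySignedPerm (IsFractionRing.ringEquivOfRingEquiv
      (negVarEquiv (R := ℚ) (some i)).toRingEquiv : RatFld L ≃+* RatFld L) 1 := by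
  refine actsBySignedPerm_ringEquivOfRingEquiv _ 1 (by simp [negVarEquiv_apply]) fun k => ?_
  rcases eq_or_ne k i with rfl | hk
  · simp [negVarEquiv_apply]
  · simp [negVarEquiv_apply, hk]

variable {m : ℕ}

noncomputable def bInvMatrix (m : ℕ) : Matrix (Fin (2 * m)) (Fin (2 * m)) (RatFld (2 * m)) :=
  Matrix.of fun i j => (bFun (2 * m) (zVar (2 * m) i) (zVar (2 * m) j))⁻¹

noncomputable def prodMulPfaffian (m : ℕ) : RatFld (2 * m) :=
  (∏ q ∈ ltPairs (2 * m), bFun (2 * m) (zVar (2 * m) q.1) (zVar (2 * m) q.2)) *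
    pfaffian (bInvMatrix m)

lemma ActsBySignedPerm.map_pfaffian_bInvMatrix {φ : RatFld (2 * m) ≃+* RatFld (2 * m)}
    {σ : Equiv.Perm (Fin (2 * m))} (h : ActsBySignedPerm φ σ) :
    φ (pfaffian (bInvMatrix m)) = σ.sign * pfaffian (bInvMatrix m) := by
  rw [_root_.map_pfaffian, ← pfaffian_submatrix]
  congr 1
  ext i j
  simp [bInvMatrix, map_inv₀, h.map_bFun_zVar]

lemma ActsBySignedPerm.map_prodMulPfaffian {φ : RatFld (2 * m) ≃+* RatFld (2 * m)}
    {σ : Equiv.Perm (Fin (2 * m))} (h : ActsBySignedPerm φ σ) :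
    φ (prodMulPfaffian m) = prodMulPfaffian m := by
  rw [prodMulPfaffian, map_mul, h.map_prod_bFun, h.map_pfaffian_bInvMatrix, mul_mul_mul_comm,
    σ.sign_mul_sign, one_mul]

lemma exists_algebraMap_eq_prod_bDen_mul_prodMulPfaffian (m : ℕ) :
    ∃ G : Pol (2 * m), algebraMap (Pol (2 * m)) (RatFld (2 * m)) G =
      algebraMap _ _ (∏ q ∈ ltPairs (2 * m), bDen q.1 q.2) * prodMulPfaffian m := by
  have hprod : algebraMap (Pol (2 * m)) (RatFld (2 * m)) (∏ q ∈ ltPairs (2 * m), bDen q.1 q.2) *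
      ∏ q ∈ ltPairs (2 * m), bFun (2 * m) (zVar (2 * m) q.1) (zVar (2 * m) q.2) =
      algebraMap _ _ (∏ q ∈ ltPairs (2 * m), bNum q.1 q.2) := by
    simp only [map_prod, bFun_zVar, ← prod_mul_distrib]
    refine prod_congr rfl fun q hq => mul_div_cancel₀ _ ?_
    exact (map_ne_zero_iff _ (IsFractionRing.injective _ _)).2
      (bDen_ne_zero (mem_ltPairs.1 hq).ne)
  have hmatrix : bInvMatrix m = Matrix.of fun i j =>
      algebraMap (Pol (2 * m)) (RatFld (2 * m)) (bDen i j) / algebraMap _ _ (bNum i j) := by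
    ext i j
    simp [bInvMatrix, bFun_zVar]
  obtain ⟨G, hG⟩ := RingHom.mem_range.1 <|
    algebraMap_prod_mul_pfaffian_mem_range (R := Pol (2 * m)) (K := RatFld (2 * m)) bDen bNum
      bNum_comm bNum_ne_zero
  exact ⟨G, by rw [hG, prodMulPfaffian, ← mul_assoc, hprod, hmatrix]⟩

lemma map_eq_sign_mul_of_algebraMap_eq {G : Pol (2 * m)}
    (hG : algebraMap (Pol (2 * m)) (RatFld (2 * m)) G =
      algebraMap _ _ (∏ q ∈ ltPairs (2 * m), bDen q.1 q.2) * prodMulPfaffian m)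
    (e : Pol (2 * m) ≃+* Pol (2 * m)) (σ : Equiv.Perm (Fin (2 * m)))
    (he : ActsBySignedPerm
      (IsFractionRing.ringEquivOfRingEquiv e : RatFld (2 * m) ≃+* RatFld (2 * m)) σ) :
    e G = σ.sign * G := by
  refine IsFractionRing.injective (Pol (2 * m)) (RatFld (2 * m)) ?_
  have h :=
    congrArg (IsFractionRing.ringEquivOfRingEquiv e : RatFld (2 * m) ≃+* RatFld (2 * m)) hG
  rw [IsFractionRing.ringEquivOfRingEquiv_algebraMap, map_mul] at h
  rw [h, he.map_algebraMap_prod_bDen, he.map_prodMulPfaffian, map_mul, map_intCast, hG,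
    mul_assoc]

lemma prod_bDen_dvd {G : Pol L}
    (hswap : ∀ i j : Fin L, i ≠ j → rename (Equiv.swap (some i) (some j)) G = -G)
    (hneg : ∀ i : Fin L, negVarEquiv (some i) G = G) :
    ∏ q ∈ ltPairs L, bDen q.1 q.2 ∣ G := by
  have hfactor : ∏ q ∈ ltPairs L, bDen q.1 q.2 =
      ∏ x ∈ ltPairs L ×ˢ ({1, -1} : Finset ℚ),
        (X (some x.1.1) - C x.2 * X (some x.1.2)) := by
    rw [prod_product]
    refine prod_congr rfl fun q _ => ?_
    rw [prod_pair (by norm_num), bDen]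
    simp only [map_one, map_neg, one_mul, neg_one_mul]
    ring
  rw [hfactor]
  refine prod_dvd_of_isRelPrime ?_ fun x hx => ?_
  · rintro ⟨q, c⟩ hx ⟨q', c'⟩ hx' hne
    simp only [coe_product, Set.mem_prod, mem_coe, mem_ltPairs] at hx hx'
    refine (irreducible_X_sub_C_mul_X (Option.some_injective _ |>.ne hx.1.ne) c
      |>.isRelPrime_iff_not_dvd).2 fun hdvd => ?_
    have hc' : c' ≠ 0 := by
      simp only [mem_insert, mem_singleton] at hx'
      rcases hx'.2 with rfl | rfl <;> norm_num
    rcases eq_of_X_sub_C_mul_X_dvd (Option.some_injective _ |>.ne hx.1.ne)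
      (Option.some_injective _ |>.ne hx'.1.ne) hc' hdvd with ⟨h1, h2, rfl⟩ | ⟨h1, h2⟩
    · exact hne (by rw [Prod.ext (Option.some_inj.1 h1) (Option.some_inj.1 h2)])
    · rw [Option.some_inj.1 h1, Option.some_inj.1 h2] at hx'
      exact hx.1.asymm hx'.1
  · simp only [mem_product, mem_ltPairs, mem_insert, mem_singleton] at hx
    exact X_sub_C_mul_X_dvd_of_rename_swap (hswap _ _ hx.1.ne) (hneg _) hx.2

end RatFld

open RatFld

theorem stmt_13_general (m : ℕ) :
    (∀ x y : RatFld (2*m), bFun (2*m) x y = - bFun (2*m) y x) ∧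
    (∃ p : MvPolynomial (Option (Fin (2*m))) ℚ,
      (∏ q ∈ Finset.univ.filter (fun q : Fin (2*m) × Fin (2*m) => q.1 < q.2),
          bFun (2*m) (zVar (2*m) q.1) (zVar (2*m) q.2)) *
        pfaffian (Matrix.of fun i j => (bFun (2*m) (zVar (2*m) i) (zVar (2*m) j))⁻¹)
        = algebraMap (MvPolynomial (Option (Fin (2*m))) ℚ) (RatFld (2*m)) p ∧
      ∀ σ : Equiv.Perm (Fin (2*m)), rename (Option.map σ) p = p) := by
  refine ⟨bFun_antisymm, ?_⟩
  obtain ⟨G, hG⟩ := exists_algebraMap_eq_prod_bDen_mul_prodMulPfaffian m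
  have hswap (i j : Fin (2 * m)) (hij : i ≠ j) :
      rename (Equiv.swap (some i) (some j)) G = -G := by
    simpa [Equiv.Perm.sign_swap hij] using
      map_eq_sign_mul_of_algebraMap_eq hG _ _ (actsBySignedPerm_rename (Equiv.swap i j))
  have hneg (i : Fin (2 * m)) : negVarEquiv (some i) G = G := by
    simpa using map_eq_sign_mul_of_algebraMap_eq hG _ _ (actsBySignedPerm_negVarEquiv i)
  obtain ⟨H, rfl⟩ := prod_bDen_dvd hswap hneg
  have hH : prodMulPfaffian m = algebraMap _ _ H := by
    refine mul_left_cancel₀ ?_ (hG.symm.trans (map_mul _ _ _))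
    exact (map_ne_zero_iff _ (IsFractionRing.injective _ _)).2 prod_bDen_ne_zero
  refine ⟨H, hH, fun σ => ?_⟩
  have h := (actsBySignedPerm_rename σ).map_prodMulPfaffian
  rw [hH, IsFractionRing.ringEquivOfRingEquiv_algebraMap] at h
  exact IsFractionRing.injective _ _ h

/-- `b` is antisymmetric, and for `L = 2m` even the product
`Π_{i<j} b(z_i,z_j) · Pf[1/b(z_i,z_j)]` is a polynomial in `z_1,…,z_L, A`,
symmetric under all permutations of the `z_i`. -/
theorem stmt_13 (m : ℕ) (hm : 0 < m) :
    (∀ x y : RatFld (2*m), bFun (2*m) x y = - bFun (2*m) y x) ∧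
    (∃ p : MvPolynomial (Option (Fin (2*m))) ℚ,
      (∏ q ∈ Finset.univ.filter (fun q : Fin (2*m) × Fin (2*m) => q.1 < q.2),
          bFun (2*m) (zVar (2*m) q.1) (zVar (2*m) q.2)) *
        pfaffian (Matrix.of fun i j => (bFun (2*m) (zVar (2*m) i) (zVar (2*m) j))⁻¹)
        = algebraMap (MvPolynomial (Option (Fin (2*m))) ℚ) (RatFld (2*m)) p ∧
      ∀ σ : Equiv.Perm (Fin (2*m)), rename (Option.map σ) p = p) :=
  stmt_13_general m
end
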